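/- Let β, b₁, b₂, c₁, c₂ > 0, let t > 0, and let L₁, L₂, G₁, G₂, X, Y : [0,t] → (0,∞) be continuous functions satisfying: (i) L₁(s) = G₁(s)/(1 + b₁∫₀ˢG₁(r)dr) and L₂(s) = G₂(s)/(1 + b₂∫₀ˢG₂(r)dr) for all s ∈ [0,t]; (ii) X(s) ≤ L₁(s) and Y(s) ≥ L₂(s) for all s; (iii) Y(s)/L₂(s) = exp( b₂∫₀ˢ(L₂(r) − Y(r))dr + c₂∫₀ˢ X(r)/(β + Y(r)) dr ) for all s. Then Y(t) ≤ L₂(t)·(1 + b₁∫₀ᵗ G₁(r)dr)^{c₂/(βb₁)}. -/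

import Mathlib

/-!
By (iii) at `s = t`, `Y t = L₂ t · exp (b₂ ∫₀ᵗ (L₂ - Y) + c₂ ∫₀ᵗ X / (β + Y))`. The first integral is
nonpositive because `L₂ ≤ Y`, and the second is at most `β⁻¹ ∫₀ᵗ L₁` because `0 ≤ X ≤ L₁` and
`Y ≥ L₂ > 0`. Finally `L₁ = G₁ / (1 + b₁ ∫₀ˢ G₁)` is the derivative of `b₁⁻¹ log (1 + b₁ ∫₀ˢ G₁)`, so
`∫₀ᵗ L₁ = b₁⁻¹ log (1 + b₁ ∫₀ᵗ G₁)`, and the exponential becomes the stated power.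
-/

open Real MeasureTheory intervalIntegral Set

lemma one_add_mul_integral_pos {G : ℝ → ℝ} {b t s : ℝ} (hb : 0 ≤ b)
    (hG : ∀ r ∈ Icc 0 t, 0 ≤ G r) (hs : s ∈ Icc 0 t) :
    0 < 1 + b * ∫ r in (0:ℝ)..s, G r := by
  have : 0 ≤ ∫ r in (0:ℝ)..s, G r :=
    integral_nonneg hs.1 fun r hr => hG r ⟨hr.1, hr.2.trans hs.2⟩
  positivity

lemma integral_div_one_add_mul_integral {G : ℝ → ℝ} {b t : ℝ} (hG : Continuous G)
    (hb : b ≠ 0) (ht : 0 ≤ t) (hpos : ∀ s ∈ Icc 0 t, 0 < 1 + b * ∫ r in (0:ℝ)..s, G r) :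
    ∫ s in (0:ℝ)..t, G s / (1 + b * ∫ r in (0:ℝ)..s, G r) =
      log (1 + b * ∫ r in (0:ℝ)..t, G r) / b := by
  set F : ℝ → ℝ := fun s => ∫ r in (0:ℝ)..s, G r
  have hF : ∀ s, HasDerivAt F (G s) s := fun s => (hG.integral_hasStrictDerivAt 0 s).hasDerivAt
  have hFc : Continuous F := continuous_iff_continuousAt.2 fun s => (hF s).continuousAt
  have hderiv : ∀ s ∈ Icc 0 t,
      HasDerivAt (fun u => log (1 + b * F u) / b) (G s / (1 + b * F s)) s := by
    intro s hs
    refine ((((hF s).const_mul b).const_add 1).log (hpos s hs).ne').div_const b |>.congr_deriv ?_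
    field_simp
  have hint : IntervalIntegrable (fun s => G s / (1 + b * F s)) volume 0 t := by
    refine ContinuousOn.intervalIntegrable ?_
    rw [uIcc_of_le ht]
    exact hG.continuousOn.div (continuous_const.add (hFc.const_mul b)).continuousOn
      fun s hs => (hpos s hs).ne'
  rw [integral_eq_sub_of_hasDerivAt (by rwa [uIcc_of_le ht]) hint]
  simp [F]

lemma integral_div_add_le_integral_div {X Y L : ℝ → ℝ} {β t : ℝ} (hβ : 0 < β) (ht : 0 ≤ t)
    (hX : Continuous X) (hY : Continuous Y) (hL : IntervalIntegrable L volume 0 t)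
    (hX0 : ∀ s ∈ Icc 0 t, 0 ≤ X s) (hY0 : ∀ s ∈ Icc 0 t, 0 ≤ Y s)
    (hXL : ∀ s ∈ Icc 0 t, X s ≤ L s) :
    ∫ s in (0:ℝ)..t, X s / (β + Y s) ≤ (∫ s in (0:ℝ)..t, L s) / β := by
  rw [← intervalIntegral.integral_div]
  refine integral_mono_on ht (ContinuousOn.intervalIntegrable ?_) (hL.div_const β) fun s hs => ?_
  · rw [uIcc_of_le ht]
    exact hX.continuousOn.div (continuous_const.add hY).continuousOn
      fun s hs => (add_pos_of_pos_of_nonneg hβ (hY0 s hs)).ne'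
  · calc X s / (β + Y s) ≤ X s / β :=
          div_le_div_of_nonneg_left (hX0 s hs) hβ (by linarith [hY0 s hs])
      _ ≤ L s / β := div_le_div_of_nonneg_right (hXL s hs) hβ.le

theorem stmt14_general (β b₁ b₂ c₂ t : ℝ) (hβ : 0 < β) (hb₁ : 0 < b₁) (hb₂ : 0 < b₂)
    (hc₂ : 0 < c₂) (ht : 0 < t) (L₁ L₂ G₁ X Y : ℝ → ℝ)
    (hL₁c : Continuous L₁) (hL₂c : Continuous L₂) (hG₁c : Continuous G₁)
    (hXc : Continuous X) (hYc : Continuous Y) (hL₂pos : ∀ s ∈ Icc (0:ℝ) t, 0 < L₂ s)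
    (hG₁pos : ∀ s ∈ Icc (0:ℝ) t, 0 < G₁ s) (hXpos : ∀ s ∈ Icc (0:ℝ) t, 0 < X s)
    (hL₁ : ∀ s ∈ Icc (0:ℝ) t, L₁ s = G₁ s / (1 + b₁ * ∫ r in (0:ℝ)..s, G₁ r))
    (hXL : ∀ s ∈ Icc (0:ℝ) t, X s ≤ L₁ s) (hYL : ∀ s ∈ Icc (0:ℝ) t, L₂ s ≤ Y s)
    (hexp : ∀ s ∈ Icc (0:ℝ) t, Y s / L₂ s =
      Real.exp ((b₂ * ∫ r in (0:ℝ)..s, (L₂ r - Y r)) +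
        c₂ * ∫ r in (0:ℝ)..s, X r / (β + Y r))) :
    Y t ≤ L₂ t * (1 + b₁ * ∫ r in (0:ℝ)..t, G₁ r) ^ (c₂ / (β * b₁)) := by
  have htt : t ∈ Icc 0 t := ⟨ht.le, le_rfl⟩
  have hden := fun s (hs : s ∈ Icc 0 t) =>
    one_add_mul_integral_pos hb₁.le (fun r hr => (hG₁pos r hr).le) hs
  have hintL₁ : ∫ s in (0:ℝ)..t, L₁ s = log (1 + b₁ * ∫ r in (0:ℝ)..t, G₁ r) / b₁ := by
    rw [integral_congr fun s hs => hL₁ s (by rwa [uIcc_of_le ht.le] at hs)]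
    exact integral_div_one_add_mul_integral hG₁c hb₁.ne' ht.le hden
  have hdrift : ∫ s in (0:ℝ)..t, (L₂ s - Y s) ≤ 0 := by
    simpa using integral_mono_on ht.le ((hL₂c.sub hYc).intervalIntegrable 0 t)
      intervalIntegrable_const fun s hs => sub_nonpos.2 (hYL s hs)
  have hpred := integral_div_add_le_integral_div hβ ht.le hXc hYc (hL₁c.intervalIntegrable 0 t)
    (fun s hs => (hXpos s hs).le) (fun s hs => (hL₂pos s hs).le.trans (hYL s hs)) hXL
  rw [hintL₁] at hpred
  calc Y t = L₂ t * exp ((b₂ * ∫ r in (0:ℝ)..t, (L₂ r - Y r)) +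
        c₂ * ∫ r in (0:ℝ)..t, X r / (β + Y r)) := by
        rw [← hexp t htt, mul_div_cancel₀ _ (hL₂pos t htt).ne']
    _ ≤ L₂ t * exp (log (1 + b₁ * ∫ r in (0:ℝ)..t, G₁ r) * (c₂ / (β * b₁))) := by
        gcongr ?_ * exp ?_
        · exact (hL₂pos t htt).le
        calc _ ≤ 0 + c₂ * (log (1 + b₁ * ∫ r in (0:ℝ)..t, G₁ r) / b₁ / β) := by
              gcongr
              exact mul_nonpos_of_nonneg_of_nonpos hb₂.le hdrift
          _ = _ := by rw [zero_add]; field_simp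
    _ = L₂ t * (1 + b₁ * ∫ r in (0:ℝ)..t, G₁ r) ^ (c₂ / (β * b₁)) := by
        rw [rpow_def_of_pos (hden t htt)]

/-- deterministic core of the upper bound on the predator:
`Y(t) ≤ L₂(t)·(1 + b₁∫₀ᵗ G₁)^{c₂/(βb₁)}`. -/
theorem stmt14 (β b₁ b₂ c₁ c₂ t : ℝ) (hβ : 0 < β) (hb₁ : 0 < b₁) (hb₂ : 0 < b₂)
    (hc₁ : 0 < c₁) (hc₂ : 0 < c₂) (ht : 0 < t)
    (L₁ L₂ G₁ G₂ X Y : ℝ → ℝ)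
    (hL₁c : Continuous L₁) (hL₂c : Continuous L₂) (hG₁c : Continuous G₁)
    (hG₂c : Continuous G₂) (hXc : Continuous X) (hYc : Continuous Y)
    (hL₁pos : ∀ s ∈ Icc (0:ℝ) t, 0 < L₁ s) (hL₂pos : ∀ s ∈ Icc (0:ℝ) t, 0 < L₂ s)
    (hG₁pos : ∀ s ∈ Icc (0:ℝ) t, 0 < G₁ s) (hG₂pos : ∀ s ∈ Icc (0:ℝ) t, 0 < G₂ s)
    (hXpos : ∀ s ∈ Icc (0:ℝ) t, 0 < X s) (hYpos : ∀ s ∈ Icc (0:ℝ) t, 0 < Y s)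
    (hL₁ : ∀ s ∈ Icc (0:ℝ) t, L₁ s = G₁ s / (1 + b₁ * ∫ r in (0:ℝ)..s, G₁ r))
    (hL₂ : ∀ s ∈ Icc (0:ℝ) t, L₂ s = G₂ s / (1 + b₂ * ∫ r in (0:ℝ)..s, G₂ r))
    (hXL : ∀ s ∈ Icc (0:ℝ) t, X s ≤ L₁ s) (hYL : ∀ s ∈ Icc (0:ℝ) t, L₂ s ≤ Y s)
    (hexp : ∀ s ∈ Icc (0:ℝ) t, Y s / L₂ s =
      Real.exp ((b₂ * ∫ r in (0:ℝ)..s, (L₂ r - Y r)) +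
        c₂ * ∫ r in (0:ℝ)..s, X r / (β + Y r))) :
    Y t ≤ L₂ t * (1 + b₁ * ∫ r in (0:ℝ)..t, G₁ r) ^ (c₂ / (β * b₁)) :=
  stmt14_general β b₁ b₂ c₂ t hβ hb₁ hb₂ hc₂ ht L₁ L₂ G₁ X Y hL₁c hL₂c hG₁c hXc hYc hL₂pos hG₁pos
    hXpos hL₁ hXL hYL hexp
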